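/- In the cyclic group ℤ_n, an element z of order e has power-graph degree at least e − 1 + φ(e)·(n/e − 1), with equality if and only if e and n/e are coprime. -/

import Mathlib

/-- The (undirected) power graph of a group: distinct elements are adjacent
iff one is a power of the other. -/
def powerGraph (G : Type*) [Group G] : SimpleGraph G where
  Adj g h := g ≠ h ∧ (g ∈ Subgroup.zpowers h ∨ h ∈ Subgroup.zpowers g)
  symm := ⟨fun _ _ ⟨hne, hor⟩ => ⟨hne.symm, hor.symm⟩⟩
  loopless := ⟨fun _ ⟨hne, _⟩ => hne rfl⟩

/-!
In a finite cyclic group `x ∈ ⟨y⟩` iff `orderOf x ∣ orderOf y`, so the neighbours of `z`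
(of order `e`, with `n = e * m`) are the elements `x ≠ z` whose order divides `e` or is a
multiple of `e`. There are `e` elements of the first kind and `∑_{k ∣ m} φ (e * k)` of the second,
and the `φ e` elements of order `e` are of both kinds, so
`deg z + 1 + φ e = e + ∑_{k ∣ m} φ (e * k)`.
Termwise `φ (e * k) ≥ φ e * φ k`, with equality when `e` and `k` are coprime, and
`∑_{k ∣ m} φ k = m`; this gives the bound. Equality forces `φ (e * m) = φ e * φ m`, which by
`φ (gcd e m) * φ (e * m) = φ e * φ m * gcd e m` means `φ (gcd e m) = gcd e m`, i.e. `gcd e m = 1`.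
-/

open Finset
open scoped Nat

namespace Nat

theorem coprime_of_totient_mul_eq {a b : ℕ} (hab : a * b ≠ 0) (h : φ (a * b) = φ a * φ b) :
    a.Coprime b := by
  have hgcd : φ (a.gcd b) = a.gcd b := by
    apply Nat.eq_of_mul_eq_mul_right (totient_pos.2 (pos_of_ne_zero hab))
    rw [totient_gcd_mul_totient_mul, ← h, mul_comm]
  have hpos : a.gcd b ≠ 0 := Nat.gcd_ne_zero_left (left_ne_zero_of_mul hab)
  by_contra hne
  exact (totient_lt _ (one_lt_iff_ne_zero_and_ne_one.2 ⟨hpos, hne⟩)).ne hgcd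

theorem totient_mul_eq_sum_totient_mul_totient (a b : ℕ) :
    φ a * b = ∑ k ∈ b.divisors, φ a * φ k := by
  rw [← mul_sum, sum_totient]

theorem totient_mul_le_sum_totient_mul (a b : ℕ) : φ a * b ≤ ∑ k ∈ b.divisors, φ (a * k) :=
  totient_mul_eq_sum_totient_mul_totient a b ▸
    sum_le_sum fun k _ => totient_super_multiplicative a k

theorem sum_totient_mul_eq_iff_coprime {a b : ℕ} (ha : a ≠ 0) (hb : b ≠ 0) :
    ∑ k ∈ b.divisors, φ (a * k) = φ a * b ↔ a.Coprime b := by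
  rw [totient_mul_eq_sum_totient_mul_totient, eq_comm,
    sum_eq_sum_iff_of_le fun k _ => totient_super_multiplicative a k]
  constructor
  · intro h
    exact coprime_of_totient_mul_eq (mul_ne_zero ha hb) (h b (mem_divisors_self b hb)).symm
  · intro h k hk
    exact (totient_mul (h.coprime_dvd_right (dvd_of_mem_divisors hk))).symm

theorem sum_divisors_mul_filter_dvd {M : Type*} [AddCommMonoid M] (f : ℕ → M) {a : ℕ}
    (ha : a ≠ 0) (b : ℕ) :
    ∑ d ∈ (a * b).divisors with a ∣ d, f d = ∑ k ∈ b.divisors, f (a * k) := by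
  symm
  have hcancel (k : ℕ) : a * k / a = k := Nat.mul_div_cancel_left k (Nat.pos_of_ne_zero ha)
  refine sum_nbij' (a * ·) (· / a) ?_ ?_ (fun k _ => hcancel k) ?_ fun _ _ => rfl
  · intro k hk
    rw [Nat.mem_divisors] at hk
    rw [mem_filter, Nat.mem_divisors]
    exact ⟨⟨mul_dvd_mul_left a hk.1, mul_ne_zero ha hk.2⟩, dvd_mul_right a k⟩
  · intro d hd
    obtain ⟨⟨hdab, hab⟩, k, rfl⟩ := (mem_filter.1 hd).imp_left Nat.mem_divisors.1
    rw [hcancel, Nat.mem_divisors]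
    exact ⟨(mul_dvd_mul_iff_left ha).1 hdab, right_ne_zero_of_mul hab⟩
  · intro d hd
    exact Nat.mul_div_cancel' (mem_filter.1 hd).2

end Nat

section IsCyclic

variable {G : Type*} [Group G] [Fintype G] [IsCyclic G]

theorem IsCyclic.mem_zpowers_iff_orderOf_dvd {a b : G} :
    a ∈ Subgroup.zpowers b ↔ orderOf a ∣ orderOf b := by
  classical
  refine ⟨orderOf_dvd_of_mem_zpowers, fun h => ?_⟩
  -- `⟨b⟩` already has `orderOf b` elements, and a cyclic group has at most that many solutions
  -- of `x ^ orderOf b = 1`.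
  have hsub : (Subgroup.zpowers b : Set G).toFinset ⊆ ({x | x ^ orderOf b = 1} : Finset G) :=
    fun x hx => by
      simpa [orderOf_dvd_iff_pow_eq_one] using orderOf_dvd_of_mem_zpowers (Set.mem_toFinset.1 hx)
  have heq := eq_of_subset_of_card_le hsub (by
    rw [Set.toFinset_card, ← Nat.card_eq_fintype_card, SetLike.coe_sort_coe, Nat.card_zpowers]
    exact IsCyclic.card_pow_eq_one_le (orderOf_pos b))
  have ha : a ∈ ({x | x ^ orderOf b = 1} : Finset G) := by
    simpa using orderOf_dvd_iff_pow_eq_one.1 h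
  rw [← heq] at ha
  simpa using ha

theorem powerGraph_adj_iff_orderOf_dvd {x y : G} :
    (powerGraph G).Adj x y ↔ x ≠ y ∧ (orderOf x ∣ orderOf y ∨ orderOf y ∣ orderOf x) := by
  simp only [powerGraph, IsCyclic.mem_zpowers_iff_orderOf_dvd]

theorem IsCyclic.card_filter_orderOf (p : ℕ → Prop) [DecidablePred p] :
    #{x : G | p (orderOf x)} = ∑ d ∈ (Fintype.card G).divisors with p d, φ d := by
  classical
  rw [card_eq_sum_card_fiberwise (f := orderOf) (t := {d ∈ (Fintype.card G).divisors | p d})]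
  · refine sum_congr rfl fun d hd => ?_
    rw [mem_filter, Nat.mem_divisors] at hd
    rw [← IsCyclic.card_orderOf_eq_totient hd.1.1, filter_filter]
    congr 1
    ext x
    simp only [mem_filter, mem_univ, true_and]
    exact ⟨And.right, fun hx => ⟨hx ▸ hd.2, hx⟩⟩
  · intro x hx
    simp only [coe_filter, mem_univ, true_and, Set.mem_ofPred_eq, Nat.mem_divisors] at hx ⊢
    exact ⟨⟨orderOf_dvd_card, Fintype.card_ne_zero⟩, hx⟩

theorem card_neighborSet_powerGraph_add_totient (z : G) :
    Nat.card ((powerGraph G).neighborSet z) + 1 + φ (orderOf z) =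
      orderOf z + ∑ k ∈ (Fintype.card G / orderOf z).divisors, φ (orderOf z * k) := by
  classical
  set e := orderOf z
  set m := Fintype.card G / e
  have hcard : Fintype.card G = e * m := (Nat.mul_div_cancel' orderOf_dvd_card).symm
  have hdvd : #{x : G | orderOf x ∣ e} = e := by
    rw [IsCyclic.card_filter_orderOf (· ∣ e),
      Nat.divisors_filter_dvd_of_dvd Fintype.card_ne_zero orderOf_dvd_card, Nat.sum_totient]
  have hmul : #{x : G | e ∣ orderOf x} = ∑ k ∈ m.divisors, φ (e * k) := by
    rw [IsCyclic.card_filter_orderOf (e ∣ ·), hcard,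
      Nat.sum_divisors_mul_filter_dvd _ (orderOf_pos z).ne']
  have hboth : #{x : G | orderOf x ∣ e ∧ e ∣ orderOf x} = φ e := by
    rw [← IsCyclic.card_orderOf_eq_totient orderOf_dvd_card]
    congr 1
    ext x
    simp only [mem_filter, mem_univ, true_and]
    exact ⟨fun h => Nat.dvd_antisymm h.1 h.2, fun h => ⟨dvd_of_eq h, dvd_of_eq h.symm⟩⟩
  have hN : (powerGraph G).neighborSet z =
      ↑((({x | orderOf x ∣ e} : Finset G) ∪ ({x | e ∣ orderOf x} : Finset G)).erase z) := by
    ext x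
    simp only [SimpleGraph.mem_neighborSet, powerGraph_adj_iff_orderOf_dvd, mem_coe, mem_erase,
      mem_union, mem_filter, mem_univ, true_and]
    exact and_congr ne_comm or_comm
  have hz : z ∈ (({x | orderOf x ∣ e} : Finset G) ∪ ({x | e ∣ orderOf x} : Finset G)) := by
    simp [e]
  have hunion := card_union_add_card_inter ({x | orderOf x ∣ e} : Finset G) {x | e ∣ orderOf x}
  rw [← filter_and, hdvd, hmul, hboth] at hunion
  rw [hN, Nat.card_coe_set_eq, Set.ncard_coe_finset, card_erase_of_mem hz]
  have := card_pos.2 ⟨z, hz⟩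
  omega

end IsCyclic

theorem degree_power_graph_zmod_lower_bound (n : ℕ) [NeZero n]
    (z : Multiplicative (ZMod n)) (e : ℕ) (he : orderOf z = e) :
    Nat.card ((powerGraph (Multiplicative (ZMod n))).neighborSet z) ≥
        e - 1 + Nat.totient e * (n / e - 1) ∧
      (Nat.card ((powerGraph (Multiplicative (ZMod n))).neighborSet z) =
          e - 1 + Nat.totient e * (n / e - 1) ↔ Nat.Coprime e (n / e)) := by
  subst he
  have hcard : Fintype.card (Multiplicative (ZMod n)) = n := by
    rw [Fintype.card_multiplicative, ZMod.card]
  have hdeg := hcard ▸ card_neighborSet_powerGraph_add_totient z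
  have he : orderOf z ≠ 0 := (orderOf_pos z).ne'
  have hm : n / orderOf z ≠ 0 :=
    (Nat.div_pos (orderOf_le_card_univ.trans_eq hcard) (orderOf_pos z)).ne'
  have hsum := Nat.totient_mul_le_sum_totient_mul (orderOf z) (n / orderOf z)
  have hsplit : φ (orderOf z) * (n / orderOf z - 1) + φ (orderOf z) =
      φ (orderOf z) * (n / orderOf z) := by
    rw [← Nat.mul_add_one, Nat.sub_add_cancel (Nat.one_le_iff_ne_zero.2 hm)]
  rw [← Nat.sum_totient_mul_eq_iff_coprime he hm]
  refine ⟨by omega, by omega, by omega⟩
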